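/- Let p^m ≡ 3 (mod 4), α a nonzero non-square in F_{p^m}, α₀^{p^s} = α, γ^4 = -4α₀. The ring F_{p^m}[x]/⟨x^{4p^s}-α⟩ has exactly two maximal ideals, namely ⟨x²+γx+γ²/2⟩ and ⟨x²-γx+γ²/2⟩, and its set of nilpotent elements is exactly the ideal ⟨x^4 - α₀⟩. -/

import Mathlib

open Polynomial

/-- The ambient ring `F_{p^m}[x]/⟨xⁿ - α⟩` of `α`-constacyclic codes over `F_{p^m}`. -/
abbrev AK (K : Type) [Field K] (α : K) (n : ℕ) : Type :=
  K[X] ⧸ Ideal.span {(X : K[X]) ^ n - C α}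

/-- The canonical projection `F_{p^m}[x] → F_{p^m}[x]/⟨xⁿ - α⟩`. -/
noncomputable def mkA (K : Type) [Field K] (α : K) (n : ℕ) : K[X] →+* AK K α n :=
  Ideal.Quotient.mk _

/-- The quadratic `x² + γx + γ²/2` over `F_{p^m}`. -/
noncomputable def qK (K : Type) [Field K] (g : K) : K[X] :=
  X ^ 2 + C g * X + C (g ^ 2 / 2)

/-!
In characteristic `p`, `x^{4p^s} - α = (x⁴ - α₀)^{p^s}`, and `γ⁴ = -4α₀` factors
`x⁴ - α₀ = q(γ) q(-γ)` with `q(g) = x² + gx + g²/2`. A root `c` of `q(g)` would make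
`((2c + g)/g)² = -1`, impossible when `|K| ≡ 3 (mod 4)`. So the modulus is `(ab)^e` with `a`, `b`
non-associated irreducibles of the principal ideal domain `K[x]`: the maximal ideals of
`K[x]/⟨(ab)^e⟩` are the images of `⟨a⟩` and `⟨b⟩`, and its nilradical is the image of `⟨ab⟩`.
-/

section PrincipalIdealQuotient

variable {R : Type*} [CommRing R] {f a b : R} {e : ℕ}

theorem span_singleton_mk_eq_map (r : R) :
    Ideal.span {Ideal.Quotient.mk (Ideal.span {f}) r} =
      (Ideal.span {r}).map (Ideal.Quotient.mk _) := by
  rw [Ideal.map_span, Set.image_singleton]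

theorem comap_span_singleton_mk_of_dvd {r : R} (hr : r ∣ f) :
    (Ideal.span {Ideal.Quotient.mk (Ideal.span {f}) r}).comap (Ideal.Quotient.mk _) =
      Ideal.span {r} := by
  rw [span_singleton_mk_eq_map,
    Ideal.comap_map_mk (Ideal.span_singleton_le_span_singleton.mpr hr)]

theorem span_singleton_mk_eq_iff_associated [IsDomain R] {r r' : R} (hr : r ∣ f)
    (hr' : r' ∣ f) :
    Ideal.span {Ideal.Quotient.mk (Ideal.span {f}) r} =
        Ideal.span {Ideal.Quotient.mk (Ideal.span {f}) r'} ↔ Associated r r' := by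
  rw [← Ideal.span_singleton_eq_span_singleton]
  constructor
  · intro h
    rw [← comap_span_singleton_mk_of_dvd hr, h, comap_span_singleton_mk_of_dvd hr']
  · intro h
    rw [span_singleton_mk_eq_map, h, ← span_singleton_mk_eq_map]

theorem span_singleton_mk_ne_of_eq_mul_pow [IsDomain R] (hfab : f = (a * b) ^ e) (he : e ≠ 0)
    (hab : ¬Associated a b) :
    Ideal.span {Ideal.Quotient.mk (Ideal.span {f}) a} ≠
      Ideal.span {Ideal.Quotient.mk (Ideal.span {f}) b} :=
  (span_singleton_mk_eq_iff_associated (hfab ▸ dvd_pow (dvd_mul_right a b) he)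
    (hfab ▸ dvd_pow (dvd_mul_left b a) he)).not.mpr hab

variable [IsPrincipalIdealRing R]

theorem isMaximal_span_singleton_mk {r : R} (hr : Irreducible r) (hrf : r ∣ f) :
    (Ideal.span {Ideal.Quotient.mk (Ideal.span {f}) r}).IsMaximal := by
  have := PrincipalIdealRing.isMaximal_of_irreducible hr
  rw [span_singleton_mk_eq_map]
  refine Ideal.IsMaximal.map_of_surjective_of_ker_le Ideal.Quotient.mk_surjective ?_
  rw [Ideal.mk_ker]
  exact Ideal.span_singleton_le_span_singleton.mpr hrf

variable [IsDomain R]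

theorem exists_irreducible_dvd_of_isMaximal (hf : f ≠ 0) {M : Ideal (R ⧸ Ideal.span {f})}
    (hM : M.IsMaximal) :
    ∃ r, Irreducible r ∧ r ∣ f ∧ M = Ideal.span {Ideal.Quotient.mk (Ideal.span {f}) r} := by
  set J := M.comap (Ideal.Quotient.mk (Ideal.span {f}))
  have hJ : J.IsMaximal := Ideal.comap_isMaximal_of_surjective _ Ideal.Quotient.mk_surjective
  obtain ⟨r, hJr⟩ := (IsPrincipalIdealRing.principal J).principal
  rw [Ideal.submodule_span_eq] at hJr
  have hfJ : f ∈ J := by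
    simp [J, Ideal.Quotient.eq_zero_iff_mem.mpr (Ideal.mem_span_singleton_self f)]
  have hrf : r ∣ f := by rwa [hJr, Ideal.mem_span_singleton] at hfJ
  have hr0 : r ≠ 0 := by rintro rfl; exact hf (zero_dvd_iff.mp hrf)
  have hr : Prime r := (Ideal.span_singleton_prime hr0).mp (hJr ▸ hJ.isPrime)
  refine ⟨r, hr.irreducible, hrf, ?_⟩
  rw [span_singleton_mk_eq_map, ← hJr,
    Ideal.map_comap_of_surjective _ Ideal.Quotient.mk_surjective]

theorem isMaximal_iff_of_eq_mul_pow (hfab : f = (a * b) ^ e) (he : e ≠ 0) (ha : Irreducible a)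
    (hb : Irreducible b) (M : Ideal (R ⧸ Ideal.span {f})) :
    M.IsMaximal ↔
      M = Ideal.span {Ideal.Quotient.mk _ a} ∨ M = Ideal.span {Ideal.Quotient.mk _ b} := by
  have haf : a ∣ f := hfab ▸ dvd_pow (dvd_mul_right a b) he
  have hbf : b ∣ f := hfab ▸ dvd_pow (dvd_mul_left b a) he
  constructor
  · intro hM
    have hf : f ≠ 0 := hfab ▸ pow_ne_zero e (mul_ne_zero ha.ne_zero hb.ne_zero)
    obtain ⟨r, hr, hrf, rfl⟩ := exists_irreducible_dvd_of_isMaximal hf hM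
    rw [span_singleton_mk_eq_iff_associated hrf haf, span_singleton_mk_eq_iff_associated hrf hbf]
    rw [hfab] at hrf
    exact (hr.prime.dvd_or_dvd (hr.prime.dvd_of_dvd_pow hrf)).imp
      (hr.associated_of_dvd ha) (hr.associated_of_dvd hb)
  · rintro (rfl | rfl)
    exacts [isMaximal_span_singleton_mk ha haf, isMaximal_span_singleton_mk hb hbf]

theorem isNilpotent_iff_mem_span_of_eq_mul_pow (hfab : f = (a * b) ^ e) (he : e ≠ 0)
    (ha : Irreducible a) (hb : Irreducible b) (hab : ¬Associated a b) (x : R ⧸ Ideal.span {f}) :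
    IsNilpotent x ↔ x ∈ Ideal.span {Ideal.Quotient.mk _ (a * b)} := by
  constructor
  · rintro ⟨k, hk⟩
    obtain ⟨u, rfl⟩ := Ideal.Quotient.mk_surjective x
    rw [← map_pow, Ideal.Quotient.eq_zero_iff_mem, Ideal.mem_span_singleton, hfab] at hk
    have hau : a ∣ u := ha.prime.dvd_of_dvd_pow ((dvd_pow (dvd_mul_right a b) he).trans hk)
    have hbu : b ∣ u := hb.prime.dvd_of_dvd_pow ((dvd_pow (dvd_mul_left b a) he).trans hk)
    have hcop : IsCoprime a b :=
      ha.coprime_iff_not_dvd.mpr fun h => hab (ha.associated_of_dvd hb h)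
    exact Ideal.mem_span_singleton.mpr (map_dvd _ (hcop.mul_dvd hau hbu))
  · intro hx
    obtain ⟨c, rfl⟩ := Ideal.mem_span_singleton'.mp hx
    refine ⟨e, ?_⟩
    rw [mul_pow, ← map_pow, ← hfab,
      Ideal.Quotient.eq_zero_iff_mem.mpr (Ideal.mem_span_singleton_self f), mul_zero]

end PrincipalIdealQuotient

section Quadratic

variable {K : Type} [Field K]

theorem two_ne_zero_of_not_isSquare_neg_one (h : ¬IsSquare (-1 : K)) : (2 : K) ≠ 0 := by
  intro h2
  exact h ⟨1, by linear_combination -h2⟩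

theorem qK_mul_qK_neg (h2 : (2 : K) ≠ 0) {g a : K} (hg : g ^ 4 = -4 * a) :
    qK K g * qK K (-g) = X ^ 4 - C a := by
  have hc : C (g ^ 2 / 2) * 2 = C g ^ 2 := by
    rw [← C_ofNat, ← C_mul, ← C_pow, div_mul_cancel₀ _ h2]
  have hc2 : C (g ^ 2 / 2) ^ 2 = -C a := by
    rw [← C_pow, ← C_neg]
    congr 1
    field_simp
    linear_combination hg
  simp only [qK, C_neg, neg_sq]
  linear_combination (X : K[X]) ^ 2 * hc + hc2

theorem qK_monic (g : K) : (qK K g).Monic := by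
  unfold qK; monicity!

theorem qK_irreducible [Fintype K] (hK : Fintype.card K % 4 = 3) {g : K} (hg : g ≠ 0) :
    Irreducible (qK K g) := by
  have hmon := qK_monic g
  have hdeg : (qK K g).natDegree = 2 := by unfold qK; compute_degree!
  have hneg : ¬IsSquare (-1 : K) := FiniteField.isSquare_neg_one_iff.not_left.mpr hK
  rw [hmon.irreducible_iff_roots_eq_zero_of_degree_le_three (by omega) (by omega),
    Multiset.eq_zero_iff_forall_notMem]
  intro c hc
  rw [mem_roots hmon.ne_zero, IsRoot.def] at hc
  simp only [qK, eval_add, eval_pow, eval_mul, eval_C, eval_X] at hc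
  have h2 := two_ne_zero_of_not_isSquare_neg_one hneg
  refine hneg ⟨(2 * c + g) / g, ?_⟩
  field_simp at hc ⊢
  linear_combination -2 * hc

theorem not_associated_qK_neg (h2 : (2 : K) ≠ 0) {g : K} (hg : g ≠ 0) :
    ¬Associated (qK K g) (qK K (-g)) := by
  intro h
  have hcoeff := congrArg (coeff · 1) (eq_of_monic_of_associated (qK_monic g) (qK_monic (-g)) h)
  norm_num [qK, coeff_X_pow, coeff_C] at hcoeff
  have h2g : 2 * g = 0 := by linear_combination hcoeff
  exact hg ((mul_eq_zero.mp h2g).resolve_left h2)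

end Quadratic

theorem stmt15_general (p s m : ℕ) (hp : p.Prime)
    (K : Type) [Field K] [Fintype K] (hK : Fintype.card K = p ^ m)
    (h3 : p ^ m % 4 = 3) (α : K) (hα : α ≠ 0)
    (α₀ : K) (hα₀ : α₀ ^ p ^ s = α) (γ : K) (hγ : γ ^ 4 = -4 * α₀) :
    (Ideal.span {mkA K α (4 * p ^ s) (qK K γ)} ≠
        Ideal.span {mkA K α (4 * p ^ s) (qK K (-γ))}) ∧
    (∀ M : Ideal (AK K α (4 * p ^ s)), M.IsMaximal ↔
        M = Ideal.span {mkA K α (4 * p ^ s) (qK K γ)} ∨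
        M = Ideal.span {mkA K α (4 * p ^ s) (qK K (-γ))}) ∧
    ∀ a : AK K α (4 * p ^ s), IsNilpotent a ↔
        a ∈ Ideal.span {mkA K α (4 * p ^ s) (X ^ 4 - C α₀)} := by
  have : Fact p.Prime := ⟨hp⟩
  have : CharP K p := charP_of_card_eq_prime_pow hK
  have hK3 : Fintype.card K % 4 = 3 := hK ▸ h3
  have h2 : (2 : K) ≠ 0 :=
    two_ne_zero_of_not_isSquare_neg_one (FiniteField.isSquare_neg_one_iff.not_left.mpr hK3)
  have he : p ^ s ≠ 0 := pow_ne_zero s hp.ne_zero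
  have hγ0 : γ ≠ 0 := by
    rintro rfl
    have h4α₀ : 2 * 2 * α₀ = 0 := by linear_combination hγ
    have hα₀0 : α₀ = 0 := by simpa [h2] using h4α₀
    exact hα (by rw [← hα₀, hα₀0, zero_pow he])
  have hfab : X ^ (4 * p ^ s) - C α = (qK K γ * qK K (-γ)) ^ p ^ s := by
    rw [qK_mul_qK_neg h2 hγ, sub_pow_char_pow, ← pow_mul, ← C_pow, hα₀]
  have ha := qK_irreducible hK3 hγ0
  have hb := qK_irreducible hK3 (neg_ne_zero.mpr hγ0)
  have hab := not_associated_qK_neg h2 hγ0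
  refine ⟨span_singleton_mk_ne_of_eq_mul_pow hfab he hab,
    isMaximal_iff_of_eq_mul_pow hfab he ha hb, ?_⟩
  rw [← qK_mul_qK_neg h2 hγ]
  exact isNilpotent_iff_mem_span_of_eq_mul_pow hfab he ha hb hab

theorem stmt15 (p s m : ℕ) (hp : p.Prime) (hodd : Odd p) (hs : 0 < s) (hm : 0 < m)
    (K : Type) [Field K] [Fintype K] (hK : Fintype.card K = p ^ m)
    (h3 : p ^ m % 4 = 3) (α : K) (hα : α ≠ 0) (hns : ¬ IsSquare α)
    (α₀ : K) (hα₀ : α₀ ^ p ^ s = α) (γ : K) (hγ : γ ^ 4 = -4 * α₀) :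
    (Ideal.span {mkA K α (4 * p ^ s) (qK K γ)} ≠
        Ideal.span {mkA K α (4 * p ^ s) (qK K (-γ))}) ∧
    (∀ M : Ideal (AK K α (4 * p ^ s)), M.IsMaximal ↔
        M = Ideal.span {mkA K α (4 * p ^ s) (qK K γ)} ∨
        M = Ideal.span {mkA K α (4 * p ^ s) (qK K (-γ))}) ∧
    ∀ a : AK K α (4 * p ^ s), IsNilpotent a ↔
        a ∈ Ideal.span {mkA K α (4 * p ^ s) (X ^ 4 - C α₀)} :=
  stmt15_general p s m hp K hK h3 α hα α₀ hα₀ γ hγ
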